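/- Let M be a closed subspace of H²(𝔻, ℂ^m) given as M = {F : F(z) = z k(z) E(z), k ∈ K}, where E ∈ H²(𝔻, ℂ^m) with ‖E‖ = 1 and the map k ↦ zkE is an isometry from K into H²(𝔻, ℂ^m), and K is a closed S*-invariant subspace of the scalar Hardy space H²(𝔻). Then M is nearly S*-invariant with defect at most 1 and defect space contained in span{E}: if F ∈ M and F(0) = 0 then S*F ∈ M ⊕ span{E}. -/

import Mathlib

noncomputable section

open scoped ENNReal ComplexConjugate
open ContinuousLinearMap

abbrev Cm (m : ℕ) := EuclideanSpace ℂ (Fin m)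
abbrev H2 (m : ℕ) := lp (fun _ : ℕ => Cm m) 2

namespace Hardy

variable {m r : ℕ}

lemma two_toReal : (2 : ℝ≥0∞).toReal = 2 := by norm_num

def shiftFun (f : ℕ → Cm m) : ℕ → Cm m := fun n => match n with
  | 0 => 0
  | k + 1 => f k

lemma shift_memℓp (f : H2 m) : Memℓp (shiftFun (f : ∀ _, Cm m)) 2 := by
  rw [memℓp_gen_iff (by norm_num)]
  have hs : Summable fun n : ℕ => ‖(f : ∀ _, Cm m) n‖ ^ (2 : ℝ≥0∞).toReal :=
    (lp.memℓp f).summable (by norm_num)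
  have : Summable fun n : ℕ =>
      ‖shiftFun (f : ∀ _, Cm m) (n + 1)‖ ^ (2 : ℝ≥0∞).toReal := hs
  exact (summable_nat_add_iff 1).mp this

/-- The forward shift `S` on the vector-valued Hardy space (Taylor-coefficient model). -/
def S (m : ℕ) : H2 m →L[ℂ] H2 m :=
  LinearMap.mkContinuous
    { toFun := fun f => ⟨shiftFun (f : ∀ _, Cm m), shift_memℓp f⟩
      map_add' := by
        intro f g
        apply Subtype.ext
        have key : shiftFun (↑(f + g) : ∀ _, Cm m)
            = shiftFun (f : ∀ _, Cm m) + shiftFun (g : ∀ _, Cm m) := by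
          funext n
          have h : (shiftFun (f : ∀ _, Cm m) + shiftFun (g : ∀ _, Cm m)) n
              = shiftFun (f : ∀ _, Cm m) n + shiftFun (g : ∀ _, Cm m) n := rfl
          rw [h, lp.coeFn_add]
          cases n with
          | zero => simp [shiftFun]
          | succ k => simp [shiftFun]
        exact key
      map_smul' := by
        intro c f
        apply Subtype.ext
        have key : shiftFun (↑(c • f) : ∀ _, Cm m)
            = c • shiftFun (f : ∀ _, Cm m) := by
          funext n
          have h : (c • shiftFun (f : ∀ _, Cm m)) n
              = c • shiftFun (f : ∀ _, Cm m) n := rfl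
          rw [h, lp.coeFn_smul]
          cases n with
          | zero => simp [shiftFun]
          | succ k => simp [shiftFun]
        exact key }
    1
    (by
      intro f
      simp only [one_mul]
      apply le_of_eq
      have h2 : (0:ℝ) < (2 : ℝ≥0∞).toReal := by norm_num
      rw [lp.norm_eq_tsum_rpow h2, lp.norm_eq_tsum_rpow h2]
      congr 1
      have hsum : Summable fun n : ℕ =>
          ‖shiftFun (f : ∀ _, Cm m) n‖ ^ (2 : ℝ≥0∞).toReal := by
        rw [← memℓp_gen_iff (by norm_num)]; exact shift_memℓp f
      have key : ∑' n : ℕ, ‖shiftFun (f : ∀ _, Cm m) n‖ ^ (2 : ℝ≥0∞).toReal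
          = ∑' n : ℕ, ‖(f : ∀ _, Cm m) n‖ ^ (2 : ℝ≥0∞).toReal := by
        rw [Summable.tsum_eq_zero_add hsum]
        simp [shiftFun]
      exact key)

/-- The backward shift `S*` (the adjoint of the forward shift). -/
def Sadj (m : ℕ) : H2 m →L[ℂ] H2 m := ContinuousLinearMap.adjoint (S m)

/-- `T` is a multiplier (multiplication by an operator-valued analytic function),
characterized by intertwining the shifts. -/
def IsMultiplier (T : H2 r →L[ℂ] H2 m) : Prop := S m ∘L T = T ∘L S r

/-- `T` is (the multiplication operator of) an inner multiplier: an isometric multiplier. -/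
def IsInnerMultiplier (T : H2 r →L[ℂ] H2 m) : Prop :=
  (∀ f, ‖T f‖ = ‖f‖) ∧ IsMultiplier T

/-- The model space `K_Θ = H² ⊖ Θ H²`. -/
def modelSpace (T : H2 r →L[ℂ] H2 m) : Submodule ℂ (H2 m) := (LinearMap.range (T : H2 r →ₗ[ℂ] H2 m))ᗮ

/-- The constant function with value `v` (Taylor coefficients `(v,0,0,…)`). -/
def const (v : Cm m) : H2 m := lp.single 2 0 v

/-- The constant function `eᵢ`. -/
def e (m : ℕ) (i : Fin m) : H2 m := const (EuclideanSpace.single i 1)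

lemma coord_norm_le (x : Cm m) (i : Fin m) : ‖x i‖ ≤ ‖x‖ := by
  rw [EuclideanSpace.norm_eq]
  have h1 : ‖x i‖ = Real.sqrt (‖x i‖ ^ 2) := by
    rw [Real.sqrt_sq (norm_nonneg _)]
  rw [h1]
  apply Real.sqrt_le_sqrt
  exact Finset.single_le_sum (f := fun j => ‖x j‖ ^ 2)
    (fun j _ => by positivity) (Finset.mem_univ i)

lemma coord_memℓp (i : Fin m) (f : H2 m) :
    Memℓp (fun n => EuclideanSpace.single (0 : Fin 1) ((f : ∀ _, Cm m) n i)) 2 := by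
  rw [memℓp_gen_iff (by norm_num)]
  have hs : Summable fun n : ℕ => ‖(f : ∀ _, Cm m) n‖ ^ (2 : ℝ≥0∞).toReal :=
    (lp.memℓp f).summable (by norm_num)
  apply Summable.of_nonneg_of_le (fun n => by positivity) _ hs
  intro n
  have : ‖EuclideanSpace.single (0 : Fin 1) ((f : ∀ _, Cm m) n i)‖
      = ‖(f : ∀ _, Cm m) n i‖ := by
    simp [EuclideanSpace.norm_single]
  rw [this]
  have h := coord_norm_le ((f : ∀ _, Cm m) n) i
  exact Real.rpow_le_rpow (norm_nonneg _) h (by norm_num)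

/-- The `i`-th coordinate (column) of a `ℂᵐ`-valued Hardy space function, as a scalar
Hardy space function. -/
def coord (i : Fin m) (f : H2 m) : H2 1 :=
  ⟨fun n => EuclideanSpace.single (0 : Fin 1) ((f : ∀ _, Cm m) n i), coord_memℓp i f⟩

/-- A multiplier on `H²(𝔻, ℂᵐ)` is diagonal, `Ψ = diag(ψ₁, …, ψ_m)`, with scalar
multipliers `ψᵢ` represented by the operators `t i`. -/
def IsDiagonal (T : H2 m →L[ℂ] H2 m) (t : Fin m → (H2 1 →L[ℂ] H2 1)) : Prop :=
  ∀ (f : H2 m) (i : Fin m), coord i (T f) = t i (coord i f)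

/-- The analytic function on the disc associated to a scalar Hardy space element. -/
def toFun (f : H2 1) (z : ℂ) : ℂ := ∑' n : ℕ, ((f : ∀ _, Cm 1) n 0) * z ^ n

/-- `F` is a finite Blaschke product on the unit disc. -/
def IsFiniteBlaschke (F : ℂ → ℂ) : Prop :=
  ∃ (k : ℕ) (c : ℂ) (a : Fin k → ℂ), ‖c‖ = 1 ∧ (∀ i, ‖a i‖ < 1) ∧
    ∀ z ∈ Metric.ball (0 : ℂ) 1,
      F z = c * ∏ i, (z - a i) / (1 - (starRingEnd ℂ) (a i) * z)

/-- `W = M ⊖ (M ∩ zH²)`. -/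
def Wspace (M : Submodule ℂ (H2 m)) : Submodule ℂ (H2 m) :=
  M ⊓ (M ⊓ LinearMap.range (S m : H2 m →ₗ[ℂ] H2 m))ᗮ

lemma tail_memℓp (f : H2 m) : Memℓp (fun n => (f : ∀ _, Cm m) (n + 1)) 2 :=
  (memℓp_gen_iff (by norm_num)).mpr <|
    (summable_nat_add_iff 1).mpr ((lp.memℓp f).summable (by norm_num))

def tail (f : H2 m) : H2 m := ⟨fun n => (f : ∀ _, Cm m) (n + 1), tail_memℓp f⟩

@[simp] lemma tail_apply (f : H2 m) (n : ℕ) :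
    (tail f : ∀ _, Cm m) n = (f : ∀ _, Cm m) (n + 1) := rfl

@[simp] lemma S_apply_zero (f : H2 m) : (S m f : ∀ _, Cm m) 0 = 0 := rfl

@[simp] lemma S_apply_succ (f : H2 m) (n : ℕ) :
    (S m f : ∀ _, Cm m) (n + 1) = (f : ∀ _, Cm m) n := rfl

lemma inner_S_left (x y : H2 m) : inner ℂ (S m x) y = inner ℂ x (tail y) := by
  have hsum : Summable fun n => inner ℂ ((S m x : ∀ _, Cm m) n) ((y : ∀ _, Cm m) n) :=
    lp.summable_inner (S m x) y
  rw [lp.inner_eq_tsum, lp.inner_eq_tsum, hsum.tsum_eq_zero_add]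
  simp

lemma Sadj_eq_tail (f : H2 m) : Sadj m f = tail f :=
  ext_inner_left ℂ fun x => by rw [Sadj, adjoint_inner_right, inner_S_left]

@[simp] lemma Sadj_S (f : H2 m) : Sadj m (S m f) = f := by
  rw [Sadj_eq_tail]
  exact lp.ext (funext fun n => rfl)

lemma S_Sadj_add_const (f : H2 m) : S m (Sadj m f) + const ((f : ∀ _, Cm m) 0) = f := by
  refine lp.ext (funext fun n => ?_)
  cases n <;> simp [Sadj_eq_tail, const, lp.single_apply]

lemma const_eq_smul_e (v : Cm 1) : const v = v 0 • e 1 0 := by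
  rw [e, const, const, ← lp.single_smul]
  congr
  ext i
  fin_cases i
  simp

/-- `S*(z k E) = z (S* k) E + k(0) E`, for a multiplier `T` playing the role of `k ↦ k E`. -/
lemma IsMultiplier.Sadj_S_apply {T : H2 r →L[ℂ] H2 m} (hT : IsMultiplier T) (k : H2 r) :
    Sadj m (S m (T k)) = S m (T (Sadj r k)) + T (const ((k : ∀ _, Cm r) 0)) := by
  conv_lhs => rw [← S_Sadj_add_const k]
  rw [map_add, ← comp_apply (S m), hT, comp_apply, Sadj_S]

end Hardy

open Hardy in
theorem stmt_13_general (m : ℕ) (TE : H2 1 →L[ℂ] H2 m) (hmul : IsMultiplier TE)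
    (E : H2 m) (hE : TE (e 1 0) = E)
    (K : Submodule ℂ (H2 1))
    (hKinv : ∀ k ∈ K, Sadj 1 k ∈ K)
    (M : Submodule ℂ (H2 m)) (hM : M = K.map ((S m ∘L TE : H2 1 →L[ℂ] H2 m) : H2 1 →ₗ[ℂ] H2 m)) :
    ∀ F ∈ M, (F : ∀ _ : ℕ, Cm m) 0 = 0 →
      Sadj m F ∈ M ⊔ Submodule.span ℂ ({E} : Set (H2 m)) := by
  rintro _ hF -
  subst hM
  obtain ⟨k, hk, rfl⟩ := Submodule.mem_map.mp hF
  have hshift : Sadj m (S m (TE k)) = S m (TE (Sadj 1 k)) + ((k : ∀ _, Cm 1) 0 0) • E := by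
    rw [hmul.Sadj_S_apply, const_eq_smul_e, map_smul, hE]
  exact hshift ▸ Submodule.add_mem_sup (Submodule.mem_map_of_mem (hKinv k hk))
    (Submodule.smul_mem _ _ (Submodule.mem_span_singleton_self E))

open Hardy in
/-- If `M = {zkE : k ∈ K}` where `E ∈ H²(𝔻, ℂᵐ)`, `‖E‖ = 1`, the map `k ↦ zkE` is
isometric on `K`, and `K` is a closed `S*`-invariant subspace of the scalar Hardy space,
then `M` is nearly `S*`-invariant with defect space contained in `span{E}`. -/
theorem stmt_13 (m : ℕ) (TE : H2 1 →L[ℂ] H2 m) (hmul : IsMultiplier TE)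
    (E : H2 m) (hE : TE (e 1 0) = E) (hnorm : ‖E‖ = 1)
    (K : Submodule ℂ (H2 1)) (hK : IsClosed (K : Set (H2 1)))
    (hKinv : ∀ k ∈ K, Sadj 1 k ∈ K)
    (hiso : ∀ k ∈ K, ‖S m (TE k)‖ = ‖k‖)
    (M : Submodule ℂ (H2 m)) (hM : M = K.map ((S m ∘L TE : H2 1 →L[ℂ] H2 m) : H2 1 →ₗ[ℂ] H2 m)) :
    ∀ F ∈ M, (F : ∀ _ : ℕ, Cm m) 0 = 0 →
      Sadj m F ∈ M ⊔ Submodule.span ℂ ({E} : Set (H2 m)) :=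
  stmt_13_general m TE hmul E hE K hKinv M hM
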